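/- arXiv:1209.1729 — 2 statements merged into one kernel-verified Lean document; each statement's English description precedes it below -/
import Mathlib

section
/- L2 bounds for the direct backstepping transformation: let A be a real n x n matrix, B in R^n, K a 1 x n row vector, and D_hat > 0. There exist positive constants N3 and N4 (depending only on A, B, K, D_hat) such that for every X in R^n and every continuously differentiable u_hat : [0,1] -> R, the function w_hat(x) = u_hat(x) - K e^{A D_hat x} X - D_hat * integral from 0 to x of K e^{A D_hat (x - y)} B u_hat(y) dy satisfies integral from 0 to 1 of w_hat(x)^2 dx <= N3 * ( |X|^2 + integral from 0 to 1 of u_hat(x)^2 dx ) and integral from 0 to 1 of (w_hat'(x))^2 dx <= N4 * ( |X|^2 + integral from 0 to 1 of u_hat(x)^2 dx + integral from 0 to 1 of (u_hat'(x))^2 dx ). -/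
/-!
With `M = D • A`, the transform is `ŵ = û - K ⬝ᵥ Y`, where
`Y x = exp (x • M) *ᵥ X + ∫₀ˣ û y • exp ((x - y) • M) *ᵥ (D • B)` is Duhamel's formula for the
solution of `Y' = M Y + û • (D • B)`, `Y 0 = X`. Hence `ŵ' = û' - (K ⬝ᵥ D • B) û - (K ᵥ* M) ⬝ᵥ Y`.
Compactness of `[0, 1]` bounds `‖Y x‖` by `C (‖X‖ + ∫₀¹ |û|)`, and Cauchy–Schwarz turns the square
of this into `2 C² (|X|² + ∫₀¹ û²)`; squaring the pointwise bounds for `ŵ` and `ŵ'` and integrating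
gives both estimates.
-/

open Matrix MeasureTheory intervalIntegral Set

theorem IsCompact.exists_forall_norm_mulVec_le {α m n : Type*} [TopologicalSpace α]
    [Fintype m] [Fintype n] {s : Set α} (hs : IsCompact s) {Φ : α → Matrix m n ℝ}
    (hΦ : ContinuousOn Φ s) : ∃ C, 0 ≤ C ∧ ∀ t ∈ s, ∀ v, ‖Φ t *ᵥ v‖ ≤ C * ‖v‖ := by
  open scoped Matrix.Norms.Operator in
  obtain ⟨C, hC⟩ := hs.exists_bound_of_continuousOn hΦ
  exact ⟨max C 0, le_max_right _ _, fun t ht v => (linfty_opNorm_mulVec _ _).trans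
    (mul_le_mul_of_nonneg_right ((hC t ht).trans (le_max_left _ _)) (norm_nonneg _))⟩

theorem abs_dotProduct_le {m : Type*} [Fintype m] (a v : m → ℝ) :
    |a ⬝ᵥ v| ≤ (∑ i, |a i|) * ‖v‖ :=
  calc |a ⬝ᵥ v| ≤ ∑ i, |a i * v i| := Finset.abs_sum_le_sum_abs _ _
    _ ≤ ∑ i, |a i| * ‖v‖ := Finset.sum_le_sum fun i _ => by
        rw [abs_mul]; exact mul_le_mul_of_nonneg_left (norm_le_pi_norm v i) (abs_nonneg _)
    _ = (∑ i, |a i|) * ‖v‖ := Finset.sum_mul _ _ _ |>.symm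

theorem HasDerivAt.const_dotProduct {m : Type*} [Fintype m] (a : m → ℝ) {v : ℝ → m → ℝ}
    {v' : m → ℝ} {x : ℝ} (hv : HasDerivAt v v' x) :
    HasDerivAt (fun t => a ⬝ᵥ v t) (a ⬝ᵥ v') x :=
  (dotProductBilin ℝ ℝ a).toContinuousLinearMap.hasFDerivAt.comp_hasDerivAt x hv

theorem norm_sq_le_sum_sq {m : Type*} [Fintype m] (X : m → ℝ) : ‖X‖ ^ 2 ≤ ∑ i, X i ^ 2 := by
  have hX : ‖X‖ ≤ √(∑ i, X i ^ 2) := (pi_norm_le_iff_of_nonneg (Real.sqrt_nonneg _)).2 fun i =>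
    Real.abs_le_sqrt (Finset.single_le_sum (f := fun i => X i ^ 2) (fun _ _ => sq_nonneg _)
      (Finset.mem_univ i))
  calc ‖X‖ ^ 2 ≤ √(∑ i, X i ^ 2) ^ 2 := pow_le_pow_left₀ (norm_nonneg X) hX 2
    _ = ∑ i, X i ^ 2 := Real.sq_sqrt (Finset.sum_nonneg fun _ _ => sq_nonneg _)

theorem sq_integral_abs_le_integral_sq {u : ℝ → ℝ} (hu : Continuous u) :
    (∫ x in (0 : ℝ)..1, |u x|) ^ 2 ≤ ∫ x in (0 : ℝ)..1, u x ^ 2 := by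
  set m := ∫ x in (0 : ℝ)..1, |u x|
  have hexpand : ∫ x in (0 : ℝ)..1, (|u x| - m) ^ 2 = (∫ x in (0 : ℝ)..1, u x ^ 2) - m ^ 2 := by
    have h : ∀ x, (|u x| - m) ^ 2 = u x ^ 2 - 2 * m * |u x| + m ^ 2 := fun x => by
      rw [sub_sq, sq_abs]; ring
    simp_rw [h]
    rw [intervalIntegral.integral_add, intervalIntegral.integral_sub,
      intervalIntegral.integral_const_mul]
    · simp only [intervalIntegral.integral_const, sub_zero, smul_eq_mul, one_mul]; ring
    all_goals exact Continuous.intervalIntegrable (by fun_prop) _ _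
  have hnonneg : 0 ≤ ∫ x in (0 : ℝ)..1, (|u x| - m) ^ 2 :=
    intervalIntegral.integral_nonneg zero_le_one fun x _ => sq_nonneg _
  linarith

theorem integral_sq_le_of_abs_le_add {f g h : ℝ → ℝ} {a b c : ℝ} (hab : a ≤ b)
    (hf : Continuous f) (hg : Continuous g) (hh : Continuous h)
    (hfgh : ∀ x ∈ Icc a b, |f x| ≤ |g x| + |h x| + c) :
    ∫ x in a..b, f x ^ 2
      ≤ 3 * ((∫ x in a..b, g x ^ 2) + (∫ x in a..b, h x ^ 2) + (b - a) * c ^ 2) := by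
  have hpt : ∀ x ∈ Icc a b, f x ^ 2 ≤ 3 * g x ^ 2 + 3 * h x ^ 2 + 3 * c ^ 2 := fun x hx => by
    have h1 := hfgh x hx
    have h2 := abs_nonneg (f x)
    nlinarith [sq_abs (f x), sq_abs (g x), sq_abs (h x), sq_nonneg (|g x| - |h x|),
      sq_nonneg (|g x| - c), sq_nonneg (|h x| - c)]
  calc ∫ x in a..b, f x ^ 2 ≤ ∫ x in a..b, (3 * g x ^ 2 + 3 * h x ^ 2 + 3 * c ^ 2) :=
        intervalIntegral.integral_mono_on hab (Continuous.intervalIntegrable (by fun_prop) _ _)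
          (Continuous.intervalIntegrable (by fun_prop) _ _) hpt
    _ = _ := by
        rw [intervalIntegral.integral_add, intervalIntegral.integral_add,
          intervalIntegral.integral_const_mul, intervalIntegral.integral_const_mul,
          intervalIntegral.integral_const]
        · simp only [smul_eq_mul]; ring
        all_goals exact Continuous.intervalIntegrable (by fun_prop) _ _

theorem sq_norm_add_integral_abs_le {m : Type*} [Fintype m] (X : m → ℝ) {u : ℝ → ℝ}
    (hu : Continuous u) :
    (‖X‖ + ∫ x in (0 : ℝ)..1, |u x|) ^ 2 ≤ 2 * (∑ i, X i ^ 2 + ∫ x in (0 : ℝ)..1, u x ^ 2) := by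
  nlinarith [norm_sq_le_sum_sq X, sq_integral_abs_le_integral_sq hu,
    sq_nonneg (‖X‖ - ∫ x in (0 : ℝ)..1, |u x|)]

theorem integral_sq_sub_sub_dotProduct_le {m : Type*} [Fintype m] {g h u : ℝ → ℝ}
    {Y : ℝ → m → ℝ} {C : ℝ} (a X : m → ℝ) (hg : Continuous g) (hh : Continuous h)
    (hu : Continuous u) (hY : Continuous Y)
    (hYC : ∀ x ∈ Icc (0 : ℝ) 1, ‖Y x‖ ≤ C * (‖X‖ + ∫ y in (0 : ℝ)..1, |u y|)) :
    ∫ x in (0 : ℝ)..1, (g x - h x - a ⬝ᵥ Y x) ^ 2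
      ≤ 3 * ((∫ x in (0 : ℝ)..1, g x ^ 2) + (∫ x in (0 : ℝ)..1, h x ^ 2)
        + 2 * ((∑ i, |a i|) * C) ^ 2 * (∑ i, X i ^ 2 + ∫ x in (0 : ℝ)..1, u x ^ 2)) := by
  set s := ‖X‖ + ∫ y in (0 : ℝ)..1, |u y|
  have hκ : 0 ≤ ∑ i, |a i| := Finset.sum_nonneg fun i _ => abs_nonneg _
  have hpt : ∀ x ∈ Icc (0 : ℝ) 1, |g x - h x - a ⬝ᵥ Y x| ≤ |g x| + |h x| + (∑ i, |a i|) * C * s :=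
    fun x hx => by
      have := abs_dotProduct_le a (Y x)
      have := mul_le_mul_of_nonneg_left (hYC x hx) hκ
      linarith [abs_sub (g x - h x) (a ⬝ᵥ Y x), abs_sub (g x) (h x)]
  have hint := integral_sq_le_of_abs_le_add zero_le_one (by fun_prop) hg hh hpt
  have hs := mul_le_mul_of_nonneg_left (sq_norm_add_integral_abs_le X hu)
    (sq_nonneg ((∑ i, |a i|) * C))
  rw [sub_zero, one_mul] at hint
  nlinarith

namespace Matrix

variable {m : Type*} [Fintype m] [DecidableEq m]

theorem exp_add_smul (M : Matrix m m ℝ) (s t : ℝ) :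
    NormedSpace.exp ((s + t) • M) = NormedSpace.exp (s • M) * NormedSpace.exp (t • M) := by
  rw [add_smul]
  exact exp_add_of_commute _ _ (((Commute.refl M).smul_left s).smul_right t)

theorem exp_smul_mul_exp_neg_smul (M : Matrix m m ℝ) (t : ℝ) :
    NormedSpace.exp (t • M) * NormedSpace.exp (-t • M) = 1 := by
  rw [← exp_add_smul, add_neg_cancel, zero_smul, NormedSpace.exp_zero]

@[fun_prop]
theorem _root_.Continuous.matrix_exp_smul {α : Type*} [TopologicalSpace α] {f : α → ℝ}
    (hf : Continuous f) (M : Matrix m m ℝ) :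
    Continuous fun a => NormedSpace.exp (f a • M) := by
  open scoped Norms.Operator in
  exact NormedSpace.exp_continuous.comp (hf.smul continuous_const)

theorem hasDerivAt_exp_smul_mulVec (M : Matrix m m ℝ) {v : ℝ → m → ℝ} {v' : m → ℝ} {x : ℝ}
    (hv : HasDerivAt v v' x) :
    HasDerivAt (fun t => NormedSpace.exp (t • M) *ᵥ v t)
      (M *ᵥ (NormedSpace.exp (x • M) *ᵥ v x) + NormedSpace.exp (x • M) *ᵥ v') x := by
  have h : HasDerivAt (fun t => NormedSpace.exp (t • M) *ᵥ v t)
      (NormedSpace.exp (x • M) *ᵥ v' + (M * NormedSpace.exp (x • M)) *ᵥ v x) x := by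
    open scoped Norms.Operator in
    exact (mulVecBilin ℝ ℝ).toContinuousBilinearMap.hasDerivAt_of_bilinear
      (fun _ => hasDerivAt_exp_smul_const' M x) (fun _ => hv)
  rwa [add_comm, ← mulVec_mulVec] at h

end Matrix

noncomputable def duhamel {m : Type*} [Fintype m] [DecidableEq m] (M : Matrix m m ℝ)
    (B X : m → ℝ) (u : ℝ → ℝ) (x : ℝ) : m → ℝ :=
  NormedSpace.exp (x • M) *ᵥ X + ∫ y in (0 : ℝ)..x, u y • NormedSpace.exp ((x - y) • M) *ᵥ B

section Duhamel

variable {m : Type*} [Fintype m] [DecidableEq m] (M : Matrix m m ℝ) (B X : m → ℝ) {u : ℝ → ℝ}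

theorem duhamel_eq_exp_smul_mulVec (hu : Continuous u) (x : ℝ) :
    duhamel M B X u x = NormedSpace.exp (x • M) *ᵥ
      (X + ∫ y in (0 : ℝ)..x, u y • NormedSpace.exp (-y • M) *ᵥ B) := by
  have hsplit : ∀ y, u y • NormedSpace.exp ((x - y) • M) *ᵥ B
      = NormedSpace.exp (x • M) *ᵥ (u y • NormedSpace.exp (-y • M) *ᵥ B) := fun y => by
    rw [sub_eq_add_neg, exp_add_smul, ← mulVec_mulVec, mulVec_smul]
  rw [duhamel, mulVec_add]
  simp_rw [hsplit]
  congr 1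
  exact ((mulVecLin (NormedSpace.exp (x • M))).toContinuousLinearMap.intervalIntegral_comp_comm
    (Continuous.intervalIntegrable (μ := volume)
      (u := fun y => u y • NormedSpace.exp (-y • M) *ᵥ B) (by fun_prop) _ _))

theorem hasDerivAt_duhamel (hu : Continuous u) (x : ℝ) :
    HasDerivAt (duhamel M B X u) (M *ᵥ duhamel M B X u x + u x • B) x := by
  have hint : HasDerivAt (fun x => X + ∫ y in (0 : ℝ)..x, u y • NormedSpace.exp (-y • M) *ᵥ B)
      (u x • NormedSpace.exp (-x • M) *ᵥ B) x :=
    (Continuous.integral_hasStrictDerivAt (by fun_prop) 0 x).hasDerivAt.const_add X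
  rw [funext (duhamel_eq_exp_smul_mulVec M B X hu)]
  convert hasDerivAt_exp_smul_mulVec M hint using 2
  rw [mulVec_smul, mulVec_mulVec, exp_smul_mul_exp_neg_smul, one_mulVec]

theorem continuous_duhamel (hu : Continuous u) : Continuous (duhamel M B X u) :=
  continuous_iff_continuousAt.2 fun x => (hasDerivAt_duhamel M B X hu x).continuousAt

theorem exists_norm_duhamel_le : ∃ C, 0 ≤ C ∧ ∀ (X : m → ℝ) (u : ℝ → ℝ), Continuous u →
    ∀ x ∈ Icc (0 : ℝ) 1, ‖duhamel M B X u x‖ ≤ C * (‖X‖ + ∫ y in (0 : ℝ)..1, |u y|) := by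
  obtain ⟨C, hC0, hC⟩ := isCompact_Icc.exists_forall_norm_mulVec_le
    (continuous_id.matrix_exp_smul M).continuousOn (s := Icc (0 : ℝ) 1)
  refine ⟨C * (1 + ‖B‖), by positivity, fun X u hu x hx => ?_⟩
  have hconv : ‖∫ y in (0 : ℝ)..x, u y • NormedSpace.exp ((x - y) • M) *ᵥ B‖
      ≤ C * ‖B‖ * ∫ y in (0 : ℝ)..1, |u y| :=
    calc _ ≤ ∫ y in (0 : ℝ)..x, C * ‖B‖ * |u y| := by
          refine norm_integral_le_of_norm_le hx.1 (ae_of_all _ fun y hy => ?_)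
            (Continuous.intervalIntegrable (by fun_prop) _ _)
          rw [norm_smul, Real.norm_eq_abs, mul_comm]
          gcongr
          exact hC _ ⟨by linarith [hy.2], by linarith [hy.1, hx.2]⟩ B
      _ ≤ ∫ y in (0 : ℝ)..1, C * ‖B‖ * |u y| :=
          integral_mono_interval le_rfl hx.1 hx.2 (ae_of_all _ fun y => by positivity)
            (Continuous.intervalIntegrable (by fun_prop) _ _)
      _ = C * ‖B‖ * ∫ y in (0 : ℝ)..1, |u y| := intervalIntegral.integral_const_mul _ _
  have hI : 0 ≤ ∫ y in (0 : ℝ)..1, |u y| :=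
    intervalIntegral.integral_nonneg zero_le_one fun y _ => abs_nonneg _
  calc ‖duhamel M B X u x‖
      ≤ ‖NormedSpace.exp (x • M) *ᵥ X‖
        + ‖∫ y in (0 : ℝ)..x, u y • NormedSpace.exp ((x - y) • M) *ᵥ B‖ := norm_add_le _ _
    _ ≤ C * ‖X‖ + C * ‖B‖ * ∫ y in (0 : ℝ)..1, |u y| := add_le_add (hC x hx X) hconv
    _ ≤ C * (1 + ‖B‖) * (‖X‖ + ∫ y in (0 : ℝ)..1, |u y|) := by
        nlinarith [mul_nonneg hC0 (norm_nonneg X), mul_nonneg hC0 hI,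
          mul_nonneg (mul_nonneg hC0 (norm_nonneg B)) (norm_nonneg X)]

theorem dotProduct_duhamel (K : m → ℝ) (hu : Continuous u) (x : ℝ) :
    K ⬝ᵥ duhamel M B X u x = K ⬝ᵥ NormedSpace.exp (x • M) *ᵥ X
      + ∫ y in (0 : ℝ)..x, (K ⬝ᵥ NormedSpace.exp ((x - y) • M) *ᵥ B) * u y := by
  have hcomm := (dotProductBilin ℝ ℝ K).toContinuousLinearMap.intervalIntegral_comp_comm
    (Continuous.intervalIntegrable (μ := volume) (a := 0) (b := x)
      (u := fun y => u y • NormedSpace.exp ((x - y) • M) *ᵥ B) (by fun_prop))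
  rw [duhamel, dotProduct_add]
  refine congrArg _ (hcomm.symm.trans ?_)
  simp [mul_comm]

theorem dotProduct_duhamel_smul (A : Matrix m m ℝ) (K : m → ℝ) (D : ℝ) (hu : Continuous u)
    (x : ℝ) :
    K ⬝ᵥ duhamel (D • A) (D • B) X u x = K ⬝ᵥ NormedSpace.exp ((D * x) • A) *ᵥ X
      + D * ∫ y in (0 : ℝ)..x, (K ⬝ᵥ NormedSpace.exp ((D * (x - y)) • A) *ᵥ B) * u y := by
  rw [dotProduct_duhamel _ _ _ _ hu, ← intervalIntegral.integral_const_mul]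
  simp only [smul_smul, mulVec_smul, dotProduct_smul, smul_eq_mul, mul_comm _ D, mul_assoc]

theorem hasDerivAt_sub_dotProduct_duhamel (K : m → ℝ) (hu : ContDiff ℝ 1 u) (x : ℝ) :
    HasDerivAt (fun x => u x - K ⬝ᵥ duhamel M B X u x)
      (deriv u x - (K ⬝ᵥ B) * u x - (K ᵥ* M) ⬝ᵥ duhamel M B X u x) x := by
  refine ((hu.differentiable one_ne_zero x).hasDerivAt.sub
    ((hasDerivAt_duhamel M B X hu.continuous x).const_dotProduct K)).congr_deriv ?_
  rw [dotProduct_add, dotProduct_mulVec, dotProduct_smul, smul_eq_mul]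
  ring

end Duhamel

theorem direct_backstepping_L2_bounds_general
    (n : ℕ) (A : Matrix (Fin n) (Fin n) ℝ) (B K : Fin n → ℝ) (D : ℝ) :
    ∃ N3 N4 : ℝ, 0 < N3 ∧ 0 < N4 ∧
      ∀ (X : Fin n → ℝ) (uh : ℝ → ℝ), ContDiff ℝ 1 uh →
        ∀ wh : ℝ → ℝ,
          (∀ x, wh x = uh x
            - K ⬝ᵥ (NormedSpace.exp ((D * x) • A)).mulVec X
            - D * ∫ y in (0 : ℝ)..x,
                (K ⬝ᵥ (NormedSpace.exp ((D * (x - y)) • A)).mulVec B) * uh y) →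
          (∫ x in (0 : ℝ)..1, (wh x) ^ 2)
              ≤ N3 * ((∑ i, (X i) ^ 2) + ∫ x in (0 : ℝ)..1, (uh x) ^ 2)
          ∧ (∫ x in (0 : ℝ)..1, (deriv wh x) ^ 2)
              ≤ N4 * ((∑ i, (X i) ^ 2) + (∫ x in (0 : ℝ)..1, (uh x) ^ 2)
                  + ∫ x in (0 : ℝ)..1, (deriv uh x) ^ 2) := by
  obtain ⟨C, -, hC⟩ := exists_norm_duhamel_le (D • A) (D • B)
  refine ⟨3 * (1 + 2 * ((∑ i, |K i|) * C) ^ 2),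
    3 * (1 + (K ⬝ᵥ D • B) ^ 2 + 2 * ((∑ i, |(K ᵥ* (D • A)) i|) * C) ^ 2),
    by positivity, by positivity, fun X u hu wh hwh => ?_⟩
  set Y := duhamel (D • A) (D • B) X u
  have hY : Continuous Y := continuous_duhamel _ _ _ hu.continuous
  have hwhY : wh = fun x => u x - K ⬝ᵥ Y x := funext fun x => by
    rw [hwh, dotProduct_duhamel_smul _ _ _ _ _ hu.continuous, sub_sub]
  have hderiv : deriv wh = fun x => deriv u x - (K ⬝ᵥ D • B) * u x - (K ᵥ* (D • A)) ⬝ᵥ Y x :=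
    funext fun x => hwhY ▸ (hasDerivAt_sub_dotProduct_duhamel _ _ _ K hu x).deriv
  have hS : 0 ≤ ∑ i, X i ^ 2 := by positivity
  have hU : 0 ≤ ∫ x in (0 : ℝ)..1, u x ^ 2 :=
    intervalIntegral.integral_nonneg zero_le_one fun x _ => sq_nonneg _
  have hU' : 0 ≤ ∫ x in (0 : ℝ)..1, deriv u x ^ 2 :=
    intervalIntegral.integral_nonneg zero_le_one fun x _ => sq_nonneg _
  have hY' := hC X u hu.continuous
  constructor
  · rw [hwhY]
    have h := integral_sq_sub_sub_dotProduct_le K X hu.continuous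
      (continuous_const (y := 0)) hu.continuous hY hY'
    simp only [sub_zero, zero_pow two_ne_zero, intervalIntegral.integral_zero, add_zero] at h
    nlinarith
  · have h := integral_sq_sub_sub_dotProduct_le (K ᵥ* (D • A)) X (hu.continuous_deriv le_rfl)
      (h := fun x => (K ⬝ᵥ D • B) * u x) (by fun_prop) hu.continuous hY hY'
    rw [hderiv]
    simp only [mul_pow, intervalIntegral.integral_const_mul] at h ⊢
    nlinarith [mul_nonneg (sq_nonneg (K ⬝ᵥ D • B)) hU', mul_nonneg (sq_nonneg (K ⬝ᵥ D • B)) hS,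
      mul_nonneg (mul_nonneg (sq_nonneg (∑ i, |(K ᵥ* (D • A)) i|)) (sq_nonneg C)) hU']

/-- L² bounds for the direct backstepping transformation (Lemma 12). -/
theorem direct_backstepping_L2_bounds
    (n : ℕ) (A : Matrix (Fin n) (Fin n) ℝ) (B K : Fin n → ℝ) (D : ℝ) (hD : 0 < D) :
    ∃ N3 N4 : ℝ, 0 < N3 ∧ 0 < N4 ∧
      ∀ (X : Fin n → ℝ) (uh : ℝ → ℝ), ContDiff ℝ 1 uh →
        ∀ wh : ℝ → ℝ,
          (∀ x, wh x = uh x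
            - K ⬝ᵥ (NormedSpace.exp ((D * x) • A)).mulVec X
            - D * ∫ y in (0 : ℝ)..x,
                (K ⬝ᵥ (NormedSpace.exp ((D * (x - y)) • A)).mulVec B) * uh y) →
          (∫ x in (0 : ℝ)..1, (wh x) ^ 2)
              ≤ N3 * ((∑ i, (X i) ^ 2) + ∫ x in (0 : ℝ)..1, (uh x) ^ 2)
          ∧ (∫ x in (0 : ℝ)..1, (deriv wh x) ^ 2)
              ≤ N4 * ((∑ i, (X i) ^ 2) + (∫ x in (0 : ℝ)..1, (uh x) ^ 2)
                  + ∫ x in (0 : ℝ)..1, (deriv uh x) ^ 2) :=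
  direct_backstepping_L2_bounds_general n A B K D
end

section
/- Bound on the transformed actuator state: let f : R^n x R -> R^n be twice continuously differentiable with f(0,0) = 0 and satisfying Assumption 1, let D_hat > 0, let alpha_star be a class K-infinity function with D_hat * e^{D_hat} * alpha3(s) <= alpha_star(s) for all s >= 0, and let kappa : R x R^n -> R be a feedback satisfying |kappa(tau, xi)| <= alpha_hat(|xi|) for all tau and xi, where alpha_hat is a class K-infinity function. Then there exists a class K-infinity function alpha11 such that for every t, every X in R^n, every continuously differentiable u_hat : [0,1] -> R with u_hat(1) = kappa(t + D_hat, p_hat(1)), and every continuous p_hat : [0,1] -> R^n satisfying p_hat(x) = X + D_hat * integral from 0 to x of f( p_hat(y), u_hat(y) ) dy for all x in [0,1], the transformed state w_hat(x) = u_hat(x) - kappa(t + D_hat x, p_hat(x)) satisfies |w_hat(x)| <= alpha11( Omega ) for all x in [0,1], where Omega = |X| + integral from 0 to 1 of alpha_star(|u_hat(y)|) dy + integral from 0 to 1 of (u_hat'(y))^2 dy. -/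
open MeasureTheory intervalIntegral Set Filter
open Topology

noncomputable section

/-- A class `K∞` function: continuous, strictly increasing and zero at zero on
`[0,∞)`, and unbounded. -/
def ClassKInf (α : ℝ → ℝ) : Prop :=
  ContinuousOn α (Ici 0) ∧ StrictMonoOn α (Ici 0) ∧ α 0 = 0 ∧
    Tendsto α atTop atTop

lemma ClassKInf.extend {α : ℝ → ℝ} (h : ClassKInf α) :
    ∃ A : ℝ → ℝ, Continuous A ∧ StrictMono A ∧ Function.Surjective A ∧
      ∀ s, 0 ≤ s → A s = α s := by
  obtain ⟨hc, hm, h0, htop⟩ := h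
  set A : ℝ → ℝ := fun s => if s ≤ 0 then s else α s with hA
  have heq : ∀ s, 0 ≤ s → A s = α s := by
    intro s hs
    by_cases hs0 : s ≤ 0
    · have : s = 0 := le_antisymm hs0 hs
      simp [A, this, h0]
    · simp [A, hs0]
  have hpos : ∀ s, 0 < s → (0:ℝ) < α s := by
    intro s hs
    have := hm (self_mem_Ici) (le_of_lt hs : (0:ℝ) ≤ s) hs
    simpa [h0] using this
  refine ⟨A, ?_, ?_, ?_, heq⟩
  · rw [continuous_iff_continuousAt]
    intro x
    rcases lt_trichotomy x 0 with hx | hx | hx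
    · refine continuousAt_id.congr ?_
      filter_upwards [Iio_mem_nhds hx] with y hy
      simp [A, le_of_lt (mem_Iio.1 hy)]
    · subst hx
      rw [continuousAt_iff_continuous_left_right]
      constructor
      · exact continuousWithinAt_id.congr (fun y hy => by simp [A, (mem_Iic.1 hy)])
          (by simp [A])
      · exact ((hc 0 self_mem_Ici).mono le_rfl).congr (fun y hy => heq y hy)
          (by simp [A, h0])
    · refine (hc.continuousAt (Ici_mem_nhds hx)).congr ?_
      filter_upwards [Ioi_mem_nhds hx] with y hy
      exact (heq y (le_of_lt hy)).symm
  · intro a b hab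
    by_cases ha : a ≤ 0 <;> by_cases hb : b ≤ 0 <;>
      simp only [A, ha, hb, if_true, if_false, if_pos, if_neg, not_false_iff]
    · exact hab
    · exact lt_of_le_of_lt ha (hpos b (lt_of_not_ge hb))
    · exact absurd (hab.trans_le hb) (not_lt.2 (le_of_not_ge ha))
    · exact hm (le_of_lt (lt_of_not_ge ha)) (le_of_lt (lt_of_not_ge hb))
        hab
  · intro c
    rcases le_or_gt c 0 with hc0 | hc0
    · exact ⟨c, by simp [A, hc0]⟩
    · obtain ⟨M, hM0, hMc⟩ : ∃ M, 0 ≤ M ∧ c ≤ α M := by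
        have := (eventually_ge_atTop (0:ℝ)).and (htop.eventually (eventually_ge_atTop c))
        obtain ⟨M, h1, h2⟩ := this.exists
        exact ⟨M, h1, h2⟩
      have hsub : Icc (0:ℝ) M ⊆ Ici 0 := Icc_subset_Ici_self
      have := intermediate_value_Icc hM0 (hc.mono hsub)
      have hcmem : c ∈ Icc (α 0) (α M) := ⟨by rw [h0]; exact hc0.le, hMc⟩
      obtain ⟨s, hs, hsc⟩ := this hcmem
      exact ⟨s, by rw [heq s hs.1]; exact hsc⟩

lemma inverse_exists {A : ℝ → ℝ} (hm : StrictMono A) (hs : Function.Surjective A) :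
    ∃ B : ℝ → ℝ, Continuous B ∧ StrictMono B ∧ ∀ s, B (A s) = s := by
  let e := StrictMono.orderIsoOfSurjective A hm hs
  exact ⟨e.symm, (e.symm.toHomeomorph).continuous, e.symm.strictMono,
    fun s => StrictMono.orderIsoOfSurjective_symm_apply_self A hm hs s⟩

lemma integral_abs_le_sqrt_integral_sq {g : ℝ → ℝ} (hg : Continuous g) :
    (∫ y in (0:ℝ)..1, |g y|) ≤ Real.sqrt (∫ y in (0:ℝ)..1, (g y) ^ 2) := by
  set Q := ∫ y in (0:ℝ)..1, (g y) ^ 2 with hQdef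
  have hQ0 : 0 ≤ Q := intervalIntegral.integral_nonneg zero_le_one (fun y _ => sq_nonneg _)
  have key : ∀ s : ℝ, 0 < s → (∫ y in (0:ℝ)..1, |g y|) ≤ s / 2 + Q / (2 * s) := by
    intro s hs
    have hpt : ∀ y ∈ Icc (0:ℝ) 1, |g y| ≤ s / 2 + (g y) ^ 2 / (2 * s) := by
      intro y _
      have h1 : (|g y| - s) ^ 2 ≥ 0 := sq_nonneg _
      have h2 : |g y| ^ 2 = (g y) ^ 2 := sq_abs _
      have hgy : 0 ≤ |g y| := abs_nonneg _
      rw [div_add_div _ _ (by norm_num : (2:ℝ) ≠ 0) (by positivity : (2*s) ≠ 0)]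
      rw [le_div_iff₀ (by positivity)]
      nlinarith
    have hint1 : IntervalIntegrable (fun y => |g y|) volume 0 1 :=
      (hg.abs).intervalIntegrable _ _
    have hint2 : IntervalIntegrable (fun y => s / 2 + (g y) ^ 2 / (2 * s)) volume 0 1 := by
      apply Continuous.intervalIntegrable
      continuity
    calc (∫ y in (0:ℝ)..1, |g y|)
        ≤ ∫ y in (0:ℝ)..1, (s / 2 + (g y) ^ 2 / (2 * s)) :=
          intervalIntegral.integral_mono_on zero_le_one hint1 hint2 hpt
      _ = s / 2 + Q / (2 * s) := by
          rw [intervalIntegral.integral_add (intervalIntegrable_const) (by apply Continuous.intervalIntegrable; continuity)]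
          simp [intervalIntegral.integral_div, hQdef]
  rcases eq_or_lt_of_le hQ0 with hQ | hQ
  · rw [← hQ, Real.sqrt_zero]
    refine le_of_forall_pos_le_add ?_
    intro ε hε
    have h := key ε hε
    rw [← hQ, zero_div] at h
    linarith
  · have hs : 0 < Real.sqrt Q := Real.sqrt_pos.2 hQ
    have := key (Real.sqrt Q) hs
    have hQs : Q / (2 * Real.sqrt Q) = Real.sqrt Q / 2 := by
      rw [eq_div_iff (by norm_num)]
      field_simp
      nlinarith [Real.sq_sqrt hQ0, Real.sqrt_nonneg Q]
    linarith [this, hQs ▸ this]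

lemma gronwall_aux {g w : ℝ → ℝ} {D : ℝ} (hD : 0 < D)
    (hgc : ContinuousOn g (Icc 0 1)) (hg0 : 0 ≤ g 0)
    (hw : Continuous w) (hw0 : ∀ y, 0 ≤ w y)
    (hderiv : ∀ x ∈ Ioo (0:ℝ) 1, ∃ g', HasDerivAt g g' x ∧ g' ≤ D * (g x + w x)) :
    ∀ x ∈ Icc (0:ℝ) 1,
      g x ≤ Real.exp D * g 0 + Real.exp D * D * ∫ y in (0:ℝ)..1, w y := by
  set φ : ℝ → ℝ := fun y => Real.exp (-D * y) * (D * w y) with hφ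
  have hφc : Continuous φ := by continuity
  have hφ0 : ∀ y, 0 ≤ φ y := fun y => mul_nonneg (Real.exp_nonneg _)
    (mul_nonneg hD.le (hw0 y))
  set I : ℝ → ℝ := fun x => ∫ y in (0:ℝ)..x, φ y with hI
  have hIderiv : ∀ x : ℝ, HasDerivAt I (φ x) x := by
    intro x
    exact intervalIntegral.integral_hasDerivAt_right
      (hφc.intervalIntegrable _ _)
      (hφc.stronglyMeasurableAtFilter _ _)
      hφc.continuousAt
  have hIc : Continuous I := by
    have : Differentiable ℝ I := fun x => (hIderiv x).differentiableAt
    exact this.continuous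
  set h : ℝ → ℝ := fun x => Real.exp (-D * x) * g x - I x with hh
  have hanti : AntitoneOn h (Icc 0 1) := by
    apply antitoneOn_of_deriv_nonpos (convex_Icc 0 1)
    · exact ((Real.continuous_exp.comp (continuous_const.mul continuous_id)).continuousOn.mul hgc).sub hIc.continuousOn
    · intro x hx
      rw [interior_Icc] at hx
      obtain ⟨g', hg', _⟩ := hderiv x hx
      exact (((Real.hasDerivAt_exp _).comp x ((hasDerivAt_id x).const_mul (-D))).mul hg').sub
        (hIderiv x) |>.differentiableAt.differentiableWithinAt
    · intro x hx
      rw [interior_Icc] at hx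
      obtain ⟨g', hg', hle⟩ := hderiv x hx
      have hd : HasDerivAt h ((-D * Real.exp (-D * x)) * g x + Real.exp (-D * x) * g' - φ x) x := by
        have h1 : HasDerivAt (fun x => Real.exp (-D * x)) (-D * Real.exp (-D * x)) x := by
          have := ((hasDerivAt_id x).const_mul (-D)).exp
          simp only [id_eq, mul_one] at this
          convert this using 1
          ring
        rw [hh]
        exact (h1.mul hg').sub (hIderiv x)
      rw [hd.deriv]
      have hexp : 0 < Real.exp (-D * x) := Real.exp_pos _
      have : (-D * Real.exp (-D * x)) * g x + Real.exp (-D * x) * g' - φ x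
          = Real.exp (-D * x) * (g' - D * (g x + w x)) := by
        rw [hφ]; ring
      rw [this]
      exact mul_nonpos_of_nonneg_of_nonpos hexp.le (by linarith)
  intro x hx
  have hkey : h x ≤ h 0 := hanti (left_mem_Icc.2 zero_le_one) hx hx.1
  have hI0 : I 0 = 0 := by simp [hI]
  have h0v : h 0 = g 0 := by simp [hh, hI0]
  rw [h0v] at hkey
  -- hkey : exp(-Dx) * g x - I x ≤ g 0
  have hxe : Real.exp (-D * x) * g x ≤ g 0 + I x := by
    rw [hh] at hkey
    simp only at hkey
    linarith
  have hgx : g x ≤ Real.exp (D * x) * (g 0 + I x) := by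
    have := mul_le_mul_of_nonneg_left hxe (Real.exp_nonneg (D * x))
    rw [← mul_assoc, ← Real.exp_add] at this
    simpa using this
  have hIx : I x ≤ ∫ y in (0:ℝ)..1, φ y :=
    intervalIntegral.integral_mono_interval le_rfl hx.1 hx.2
      (Eventually.of_forall fun y => hφ0 y) (hφc.intervalIntegrable _ _)
  have hφle : (∫ y in (0:ℝ)..1, φ y) ≤ ∫ y in (0:ℝ)..1, D * w y := by
    apply intervalIntegral.integral_mono_on zero_le_one (hφc.intervalIntegrable _ _)
      ((continuous_const.mul hw).intervalIntegrable _ _)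
    intro y hy
    show Real.exp (-D * y) * (D * w y) ≤ D * w y
    have h1 : Real.exp (-D * y) ≤ 1 := by
      rw [Real.exp_le_one_iff]
      have := hy.1
      nlinarith
    nlinarith [mul_nonneg hD.le (hw0 y), Real.exp_nonneg (-D * y)]
  have hIw : I x ≤ D * ∫ y in (0:ℝ)..1, w y := by
    have h2 := hIx.trans hφle
    rwa [intervalIntegral.integral_const_mul] at h2
  have hexpx : Real.exp (D * x) ≤ Real.exp D := by
    apply Real.exp_le_exp.2
    nlinarith [hx.1, hx.2]
  have hIpos : 0 ≤ I x := intervalIntegral.integral_nonneg hx.1 (fun y _ => hφ0 y)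
  have hwint : 0 ≤ ∫ y in (0:ℝ)..1, w y :=
    intervalIntegral.integral_nonneg zero_le_one (fun y _ => hw0 y)
  calc g x ≤ Real.exp (D * x) * (g 0 + I x) := hgx
    _ ≤ Real.exp D * (g 0 + I x) := by
        apply mul_le_mul_of_nonneg_right hexpx (by linarith)
    _ ≤ Real.exp D * (g 0 + D * ∫ y in (0:ℝ)..1, w y) := by
        apply mul_le_mul_of_nonneg_left _ (Real.exp_nonneg D)
        linarith
    _ = Real.exp D * g 0 + Real.exp D * D * ∫ y in (0:ℝ)..1, w y := by ring

lemma ClassKInf.nonneg {α : ℝ → ℝ} (h : ClassKInf α) {s : ℝ} (hs : 0 ≤ s) : 0 ≤ α s := by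
  rcases eq_or_lt_of_le hs with h0 | h0
  · rw [← h0, h.2.2.1]
  · rw [← h.2.2.1]
    exact (h.2.1 self_mem_Ici hs h0).le


/-- Bound on the transformed actuator state `ŵ` (Lemma B.3, estimate (B.21)). -/
theorem transformed_actuator_state_bound
    (n : ℕ) (D : ℝ) (hD : 0 < D)
    (f : EuclideanSpace ℝ (Fin n) → ℝ → EuclideanSpace ℝ (Fin n))
    (hf : ContDiff ℝ 2 (fun p : EuclideanSpace ℝ (Fin n) × ℝ => f p.1 p.2))
    (hf0 : f 0 0 = 0)
    -- Assumption 1 (strong forward completeness)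
    (R : EuclideanSpace ℝ (Fin n) → ℝ) (hR : ContDiff ℝ (⊤ : ℕ∞) R)
    (hR0 : R 0 = 0) (hRpos : ∀ X, X ≠ 0 → 0 < R X)
    (α1 α2 α3 : ℝ → ℝ)
    (hα1 : ClassKInf α1) (hα2 : ClassKInf α2) (hα3 : ClassKInf α3)
    (hsand : ∀ X, α1 ‖X‖ ≤ R X ∧ R X ≤ α2 ‖X‖)
    (hfc : ∀ X ω, fderiv ℝ R X (f X ω) ≤ R X + α3 |ω|)
    -- the majorizing class K∞ function α*
    (αstar : ℝ → ℝ) (hαstar : ClassKInf αstar)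
    (hmaj : ∀ s, 0 ≤ s → D * Real.exp D * α3 s ≤ αstar s)
    -- the feedback κ and its class K∞ bound
    (κ : ℝ → EuclideanSpace ℝ (Fin n) → ℝ)
    (αhat : ℝ → ℝ) (hαhat : ClassKInf αhat)
    (hκ : ∀ τ ξ, |κ τ ξ| ≤ αhat ‖ξ‖) :
    ∃ α11 : ℝ → ℝ, ClassKInf α11 ∧
      ∀ (t : ℝ) (X : EuclideanSpace ℝ (Fin n)) (uh : ℝ → ℝ)
        (ph : ℝ → EuclideanSpace ℝ (Fin n)),
        ContDiff ℝ 1 uh → ContinuousOn ph (Icc 0 1) →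
        uh 1 = κ (t + D) (ph 1) →
        (∀ x ∈ Icc (0 : ℝ) 1,
          ph x = X + D • ∫ y in (0 : ℝ)..x, f (ph y) (uh y)) →
        ∀ wh : ℝ → ℝ,
          (∀ x, wh x = uh x - κ (t + D * x) (ph x)) →
          ∀ x ∈ Icc (0 : ℝ) 1,
            |wh x| ≤ α11 (‖X‖ + (∫ y in (0 : ℝ)..1, αstar |uh y|)
              + ∫ y in (0 : ℝ)..1, (deriv uh y) ^ 2) := by
  obtain ⟨A1, hA1c, hA1m, hA1s, hA1eq⟩ := hα1.extend
  obtain ⟨B, hBc, hBm, hBinv⟩ := inverse_exists hA1m hA1s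
  obtain ⟨A2, hA2c, hA2m, hA2s, hA2eq⟩ := hα2.extend
  obtain ⟨Ah, hAhc, hAhm, hAhs, hAheq⟩ := hαhat.extend
  have hA10 : A1 0 = 0 := by rw [hA1eq 0 le_rfl, hα1.2.2.1]
  have hA20 : A2 0 = 0 := by rw [hA2eq 0 le_rfl, hα2.2.2.1]
  have hAh0 : Ah 0 = 0 := by rw [hAheq 0 le_rfl, hαhat.2.2.1]
  have hB0 : B 0 = 0 := by have := hBinv 0; rwa [hA10] at this
  set α11 : ℝ → ℝ := fun s => 2 * Ah (B (Real.exp D * A2 s + s)) + Real.sqrt s + s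
    with hα11
  have hα11K : ClassKInf α11 := by
    refine ⟨?_, ?_, ?_, ?_⟩
    · apply Continuous.continuousOn
      continuity
    · intro a ha b hb hab
      have h1 : Real.exp D * A2 a + a < Real.exp D * A2 b + b := by
        have := hA2m hab
        nlinarith [Real.exp_pos D]
      have h2 : Ah (B (Real.exp D * A2 a + a)) ≤ Ah (B (Real.exp D * A2 b + b)) :=
        hAhm.monotone (hBm.monotone h1.le)
      have h3 : Real.sqrt a ≤ Real.sqrt b := Real.sqrt_le_sqrt hab.le
      simp only [α11]
      linarith
    · simp [α11, hA20, hB0, hAh0]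
    · refine tendsto_atTop_mono' atTop ?_ tendsto_id
      filter_upwards [eventually_ge_atTop (0:ℝ)] with s hs
      have h1 : 0 ≤ A2 s := by rw [hA2eq s hs]; exact hα2.nonneg hs
      have h2 : 0 ≤ Real.exp D * A2 s + s := by positivity
      have h3 : 0 ≤ B (Real.exp D * A2 s + s) := by
        rw [← hB0]; exact hBm.monotone h2
      have h4 : 0 ≤ Ah (B (Real.exp D * A2 s + s)) := by
        rw [← hAh0]; exact hAhm.monotone h3
      have h5 : 0 ≤ Real.sqrt s := Real.sqrt_nonneg s
      show id s ≤ α11 s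
      simp only [α11, id]
      linarith
  refine ⟨α11, hα11K, ?_⟩
  intro t X uh ph huh hphc huh1 hph wh hwh x hx
  set Ω := ‖X‖ + (∫ y in (0:ℝ)..1, αstar |uh y|) + ∫ y in (0:ℝ)..1, (deriv uh y) ^ 2
    with hΩdef
  have huhc : Continuous uh := huh.continuous
  have hduc : Continuous (deriv uh) := huh.continuous_deriv le_rfl
  have hαsc : Continuous (fun y => αstar |uh y|) :=
    hαstar.1.comp_continuous huhc.abs (fun y => mem_Ici.2 (abs_nonneg _))
  have hα3c : Continuous (fun y => α3 |uh y|) :=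
    hα3.1.comp_continuous huhc.abs (fun y => mem_Ici.2 (abs_nonneg _))
  have hα3nn : ∀ y, 0 ≤ α3 |uh y| := fun y => hα3.nonneg (abs_nonneg _)
  have hαsnn : ∀ y, 0 ≤ αstar |uh y| := fun y => hαstar.nonneg (abs_nonneg _)
  have hIαs : 0 ≤ ∫ y in (0:ℝ)..1, αstar |uh y| :=
    intervalIntegral.integral_nonneg zero_le_one (fun y _ => hαsnn y)
  have hIdu : 0 ≤ ∫ y in (0:ℝ)..1, (deriv uh y) ^ 2 :=
    intervalIntegral.integral_nonneg zero_le_one (fun y _ => sq_nonneg _)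
  have hΩ0 : 0 ≤ Ω := by rw [hΩdef]; have := norm_nonneg X; linarith
  have hXΩ : ‖X‖ ≤ Ω := by rw [hΩdef]; linarith
  set F := fun y => f (ph y) (uh y) with hF
  have hFc : ContinuousOn F (Icc 0 1) :=
    hf.continuous.comp_continuousOn (f := fun y => (ph y, uh y)) (hphc.prodMk huhc.continuousOn)
  have hphd : ∀ z ∈ Ioo (0:ℝ) 1, HasDerivAt ph (D • F z) z := by
    intro z hz
    have hmem : Icc (0:ℝ) 1 ∈ 𝓝 z := Icc_mem_nhds hz.1 hz.2
    have hint : IntervalIntegrable F volume 0 z :=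
      (hFc.mono (by rw [uIcc_of_le hz.1.le]; exact Icc_subset_Icc le_rfl hz.2.le)).intervalIntegrable
    have hmeas : StronglyMeasurableAtFilter F (𝓝 z) :=
      ⟨Icc 0 1, hmem, hFc.aestronglyMeasurable measurableSet_Icc⟩
    have hca : ContinuousAt F z := hFc.continuousAt hmem
    have hJ : HasDerivAt (fun u => ∫ y in (0:ℝ)..u, F y) (F z) z :=
      intervalIntegral.integral_hasDerivAt_right hint hmeas hca
    have hRHS : HasDerivAt (fun u => X + D • ∫ y in (0:ℝ)..u, F y) (D • F z) z :=
      (hJ.const_smul D).const_add X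
    apply hRHS.congr_of_eventuallyEq
    filter_upwards [hmem] with u hu
    exact hph u hu
  set g : ℝ → ℝ := fun z => R (ph z) with hg
  have hgc : ContinuousOn g (Icc 0 1) := hR.continuous.comp_continuousOn hphc
  have hph0 : ph 0 = X := by
    have := hph 0 (left_mem_Icc.2 zero_le_one)
    simpa using this
  have hRnn : ∀ Y, 0 ≤ R Y := fun Y => le_trans (hα1.nonneg (norm_nonneg Y)) (hsand Y).1
  have hg0 : g 0 = R X := by rw [hg]; simp [hph0]
  have hgd : ∀ z ∈ Ioo (0:ℝ) 1, ∃ g', HasDerivAt g g' z ∧ g' ≤ D * (g z + α3 |uh z|) := by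
    intro z hz
    have hphz := hphd z hz
    have hRd : HasFDerivAt R (fderiv ℝ R (ph z)) (ph z) :=
      (hR.differentiable (by simp) (ph z)).hasFDerivAt
    refine ⟨fderiv ℝ R (ph z) (D • F z), hRd.comp_hasDerivAt z hphz, ?_⟩
    rw [_root_.map_smul, smul_eq_mul]
    exact mul_le_mul_of_nonneg_left (hfc (ph z) (uh z)) hD.le
  have hgron := gronwall_aux hD hgc (by rw [hg0]; exact hRnn X) hα3c hα3nn hgd
  set c := Real.exp D * A2 Ω + Ω with hc
  have hcnn : 0 ≤ c := by
    rw [hc]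
    have h1 : 0 ≤ A2 Ω := by rw [hA2eq Ω hΩ0]; exact hα2.nonneg hΩ0
    positivity
  have hBc0 : 0 ≤ B c := by rw [← hB0]; exact hBm.monotone hcnn
  have hbound : ∀ z ∈ Icc (0:ℝ) 1, ‖ph z‖ ≤ B c := by
    intro z hz
    have h1 := hgron z hz
    have h2 : Real.exp D * D * ∫ y in (0:ℝ)..1, α3 |uh y| ≤ ∫ y in (0:ℝ)..1, αstar |uh y| := by
      rw [← intervalIntegral.integral_const_mul]
      apply intervalIntegral.integral_mono_on zero_le_one
        ((continuous_const.mul hα3c).intervalIntegrable _ _) (hαsc.intervalIntegrable _ _)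
      intro y _
      have heq : Real.exp D * D * α3 |uh y| = D * Real.exp D * α3 |uh y| := by ring
      show Real.exp D * D * α3 |uh y| ≤ _; rw [heq]
      exact hmaj _ (abs_nonneg _)
    have hRX : R X ≤ α2 ‖X‖ := (hsand X).2
    have h2' : Real.exp D * R X ≤ Real.exp D * α2 ‖X‖ :=
      mul_le_mul_of_nonneg_left hRX (Real.exp_nonneg D)
    have h4 : α2 ‖X‖ ≤ A2 Ω := by
      rw [hA2eq Ω hΩ0]
      exact hα2.2.1.monotoneOn (mem_Ici.2 (norm_nonneg X)) (mem_Ici.2 hΩ0) hXΩ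
    have h4' : Real.exp D * α2 ‖X‖ ≤ Real.exp D * A2 Ω :=
      mul_le_mul_of_nonneg_left h4 (Real.exp_nonneg D)
    have hIΩ : (∫ y in (0:ℝ)..1, αstar |uh y|) ≤ Ω := by
      rw [hΩdef]
      have := norm_nonneg X
      linarith
    have h5 : α1 ‖ph z‖ ≤ c := by
      have ha1 := (hsand (ph z)).1
      rw [hg0] at h1
      rw [hc]
      have hgz : g z = R (ph z) := rfl
      rw [hgz] at h1
      linarith
    calc ‖ph z‖ = B (A1 ‖ph z‖) := (hBinv _).symm
      _ ≤ B c := hBm.monotone (by rw [hA1eq _ (norm_nonneg _)]; exact h5)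
  have hκb : ∀ τ z, z ∈ Icc (0:ℝ) 1 → |κ τ (ph z)| ≤ Ah (B c) := by
    intro τ z hz
    have h1 := hκ τ (ph z)
    have h2 : αhat ‖ph z‖ ≤ αhat (B c) :=
      hαhat.2.1.monotoneOn (mem_Ici.2 (norm_nonneg _)) (mem_Ici.2 hBc0) (hbound z hz)
    calc |κ τ (ph z)| ≤ αhat ‖ph z‖ := h1
      _ ≤ αhat (B c) := h2
      _ = Ah (B c) := (hAheq _ hBc0).symm
  have habs : (∫ y in (0:ℝ)..1, |deriv uh y|) ≤ Real.sqrt Ω := by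
    have h1 := integral_abs_le_sqrt_integral_sq hduc
    have h2 : (∫ y in (0:ℝ)..1, (deriv uh y) ^ 2) ≤ Ω := by
      rw [hΩdef]
      have := norm_nonneg X
      linarith
    exact h1.trans (Real.sqrt_le_sqrt h2)
  have huhb : |uh x| ≤ Ah (B c) + Real.sqrt Ω := by
    have h1 : uh 1 - uh x = ∫ y in x..1, deriv uh y := by
      rw [intervalIntegral.integral_deriv_eq_sub (fun y _ => (huh.differentiable one_ne_zero) y)
        (hduc.intervalIntegrable _ _)]
    have h2 : |∫ y in x..1, deriv uh y| ≤ ∫ y in x..1, |deriv uh y| :=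
      intervalIntegral.abs_integral_le_integral_abs hx.2
    have h3 : (∫ y in x..1, |deriv uh y|) ≤ ∫ y in (0:ℝ)..1, |deriv uh y| :=
      intervalIntegral.integral_mono_interval hx.1 hx.2 le_rfl
        (Eventually.of_forall fun y => abs_nonneg _) (hduc.abs.intervalIntegrable _ _)
    have h4 : |uh 1| ≤ Ah (B c) := by
      rw [huh1]
      exact hκb _ 1 (right_mem_Icc.2 zero_le_one)
    have h5 : |uh x| ≤ |uh 1| + |uh 1 - uh x| := by
      simpa [sub_sub_cancel] using abs_sub (uh 1) (uh 1 - uh x)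
    rw [h1] at h5
    linarith
  have hfin : |wh x| ≤ |uh x| + |κ (t + D * x) (ph x)| := by
    rw [hwh x]
    exact abs_sub _ _
  have hκx := hκb (t + D * x) x hx
  have hgoal : α11 Ω = 2 * Ah (B c) + Real.sqrt Ω + Ω := by rw [hα11, hc]
  rw [hgoal]
  linarith
end
end
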